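/- arXiv:1004.3220 — 2 statements merged into one kernel-verified Lean document; each statement's English description precedes it below -/
import Mathlib

section
/- For every m ≥ 0, the following identity holds in ℚ⟦t,u,z⟧: Σ_{k≥0} (u-1)^{m+1}·(1-zt)^{m+1}·u^k·(1-t)^{k(m+1)}·Π_{i=1}^{k+1} γ_i^{-1} = -Σ_{j=0}^{m} (u-1)^j·(1-zt)^j·u^{m-j}·Π_{i=j+1}^{m} (1 - (1-t)^i), where the infinite sum on the left converges in the formal power series topology. -/
/-!
STATEMENT 10: For every m ≥ 0, in ℚ⟦t,u,z⟧:
Σ_{k≥0} (u-1)^{m+1}·(1-zt)^{m+1}·u^k·(1-t)^{k(m+1)}·Π_{i=1}^{k+1} γ_i⁻¹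
  = -Σ_{j=0}^{m} (u-1)^j·(1-zt)^j·u^{m-j}·Π_{i=j+1}^{m} (1 - (1-t)^i),
the infinite sum on the left converging in the formal power series topology.
-/

/-- `HasPSSum f S` : the (possibly infinite) family `f` of formal power series is
summable in the formal power series topology (coefficientwise, only finitely many
terms contribute to each coefficient) and its sum is `S`. -/
def HasPSSum {ι : Type*} {σ : Type*} (f : ι → MvPowerSeries σ ℚ) (S : MvPowerSeries σ ℚ) : Prop :=
  ∀ e : σ →₀ ℕ, ∃ A : Finset ι, (∀ i ∉ A, MvPowerSeries.coeff e (f i) = 0) ∧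
    MvPowerSeries.coeff e S = ∑ i ∈ A, MvPowerSeries.coeff e (f i)

open MvPowerSeries

/-- The variable `t` in `ℚ⟦t,u,z⟧`. -/
noncomputable def T : MvPowerSeries (Fin 3) ℚ := X 0
/-- The variable `u` in `ℚ⟦t,u,z⟧`. -/
noncomputable def U : MvPowerSeries (Fin 3) ℚ := X 1
/-- The variable `z` in `ℚ⟦t,u,z⟧`. -/
noncomputable def Z : MvPowerSeries (Fin 3) ℚ := X 2

/-- `γ_0 = 1` and `γ_k = u - (1-zt)(1-t)^{k-1} (u-1)` for `k ≥ 1`. -/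
noncomputable def gammaS : ℕ → MvPowerSeries (Fin 3) ℚ
  | 0 => 1
  | k + 1 => U - (1 - Z * T) * (1 - T) ^ k * (U - 1)

/-!
Write `c = (u-1)(1-zt)`, `q = 1-t` and `p_k = ∏_{i=1}^{k} γ_i⁻¹`, so that `γ_{k+1} = u - c q^k` and
`p_k = γ_{k+1} p_{k+1}`. Only this recursion is needed, so the argument runs in any commutative ring.
For `m = 0` the series telescopes: its partial sums are `u^n p_n - 1`. Passing from `m` to `m+1`,
the terms satisfy `a_{m+1}(k+1) = u a_m(k+1) - u q^{m+1} a_m(k)`, so the partial sums obey the same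
recursion `Q_{m+1} = u (1 - q^{m+1}) Q_m - c^{m+1}` as the right-hand sides, up to a multiple of
`u^N`. Hence the partial sum of the first `m + N` terms agrees with `Q_m` modulo `u^N`, which in
`ℚ⟦t,u,z⟧` forces convergence to `Q_m`, since the `k`-th term is itself divisible by `u^k`.
-/

open Finset

theorem hasPSSum_of_X_pow_dvd {σ : Type*} (s : σ) (f : ℕ → MvPowerSeries σ ℚ)
    (S : MvPowerSeries σ ℚ) (m : ℕ) (hf : ∀ k, X s ^ k ∣ f k)
    (hS : ∀ N, X s ^ N ∣ ∑ k ∈ range (m + N), f k - S) : HasPSSum f S := by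
  intro e
  refine ⟨range (m + (e s + 1)), fun k hk => ?_, ?_⟩
  · exact X_pow_dvd_iff.mp (hf k) e (by simp only [mem_range, not_lt] at hk; omega)
  · have hcoeff := X_pow_dvd_iff.mp (hS (e s + 1)) e (Nat.lt_succ_self _)
    rw [map_sub, map_sum, sub_eq_zero] at hcoeff
    exact hcoeff.symm

section Recursion

variable {R : Type*} [CommRing R] (u c q : R) (p : ℕ → R)

def psiTerm (m k : ℕ) : R := c ^ (m + 1) * u ^ k * q ^ (k * (m + 1)) * p (k + 1)

def psiPolynomial (m : ℕ) : R :=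
  -∑ j ∈ range (m + 1), c ^ j * u ^ (m - j) * ∏ i ∈ Ico (j + 1) (m + 1), (1 - q ^ i)

theorem psiPolynomial_zero : psiPolynomial u c q 0 = -1 := by
  simp [psiPolynomial]

theorem psiPolynomial_succ (m : ℕ) :
    psiPolynomial u c q (m + 1) = u * (1 - q ^ (m + 1)) * psiPolynomial u c q m - c ^ (m + 1) := by
  have hterm : ∀ j ∈ range (m + 1),
      c ^ j * u ^ (m + 1 - j) * ∏ i ∈ Ico (j + 1) (m + 2), (1 - q ^ i) =
        u * (1 - q ^ (m + 1)) * (c ^ j * u ^ (m - j) * ∏ i ∈ Ico (j + 1) (m + 1), (1 - q ^ i)) := by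
    intro j hj
    rw [mem_range] at hj
    rw [Nat.sub_add_comm (by omega), prod_Ico_succ_top (by omega), pow_succ]
    ring
  rw [psiPolynomial, psiPolynomial, sum_range_succ, sum_congr rfl hterm, ← mul_sum, Nat.sub_self,
    Ico_self, prod_empty, pow_zero, mul_one, mul_one]
  ring

theorem pow_dvd_psiTerm (m k : ℕ) : u ^ k ∣ psiTerm u c q p m k :=
  ⟨c ^ (m + 1) * q ^ (k * (m + 1)) * p (k + 1), by rw [psiTerm]; ring⟩

variable {u c q p} (hp : ∀ k, p k = (u - c * q ^ k) * p (k + 1))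
include hp

theorem sum_range_psiTerm_zero (n : ℕ) :
    ∑ k ∈ range n, psiTerm u c q p 0 k = u ^ n * p n - p 0 := by
  have htel : ∀ k, psiTerm u c q p 0 k = u ^ (k + 1) * p (k + 1) - u ^ k * p k := by
    intro k
    rw [psiTerm, hp k]
    ring
  simpa only [htel, pow_zero, one_mul] using sum_range_sub (fun k => u ^ k * p k) n

theorem psiTerm_succ_zero (m : ℕ) :
    psiTerm u c q p (m + 1) 0 = u * psiTerm u c q p m 0 - c ^ (m + 1) * p 0 := by
  simp only [psiTerm, hp 0]
  ring

theorem psiTerm_succ_succ (m k : ℕ) :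
    psiTerm u c q p (m + 1) (k + 1) =
      u * psiTerm u c q p m (k + 1) - u * q ^ (m + 1) * psiTerm u c q p m k := by
  simp only [psiTerm, hp (k + 1)]
  ring

theorem sum_range_psiTerm_succ (m n : ℕ) :
    ∑ k ∈ range (n + 1), psiTerm u c q p (m + 1) k =
      u * (1 - q ^ (m + 1)) * ∑ k ∈ range n, psiTerm u c q p m k
        + u * psiTerm u c q p m n - c ^ (m + 1) * p 0 := by
  have hshift := sum_range_succ' (psiTerm u c q p m) n
  rw [sum_range_succ] at hshift
  rw [sum_range_succ', psiTerm_succ_zero hp]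
  simp only [psiTerm_succ_succ hp, sum_sub_distrib, ← mul_sum]
  linear_combination -u * hshift

theorem pow_dvd_sum_range_psiTerm_sub (hp0 : p 0 = 1) (m N : ℕ) :
    u ^ N ∣ ∑ k ∈ range (m + N), psiTerm u c q p m k - psiPolynomial u c q m := by
  induction m generalizing N with
  | zero =>
    rw [zero_add, sum_range_psiTerm_zero hp, psiPolynomial_zero, hp0, sub_neg_eq_add,
      sub_add_cancel]
    exact dvd_mul_right _ _
  | succ m ih =>
    have hdiff : ∑ k ∈ range (m + 1 + N), psiTerm u c q p (m + 1) k - psiPolynomial u c q (m + 1) =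
        u * (1 - q ^ (m + 1)) * (∑ k ∈ range (m + N), psiTerm u c q p m k - psiPolynomial u c q m)
          + u * psiTerm u c q p m (m + N) := by
      rw [Nat.add_right_comm, sum_range_psiTerm_succ hp, psiPolynomial_succ, hp0]
      ring
    rw [hdiff]
    exact dvd_add (dvd_mul_of_dvd_right (ih N) _)
      (dvd_mul_of_dvd_right ((pow_dvd_pow u (Nat.le_add_left N m)).trans (pow_dvd_psiTerm ..)) _)

end Recursion

theorem gammaS_succ_mul_inv (k : ℕ) : gammaS (k + 1) * (gammaS (k + 1))⁻¹ = 1 :=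
  MvPowerSeries.mul_inv_cancel _ (by simp [gammaS, T, U, Z])

theorem prod_inv_gammaS_eq (k : ℕ) :
    ∏ i ∈ Icc 1 k, (gammaS i)⁻¹ =
      (U - (U - 1) * (1 - Z * T) * (1 - T) ^ k) * ∏ i ∈ Icc 1 (k + 1), (gammaS i)⁻¹ := by
  rw [prod_Icc_succ_top (Nat.le_add_left 1 k), ← mul_assoc, mul_right_comm _ _ (gammaS _)⁻¹]
  have hγ : U - (U - 1) * (1 - Z * T) * (1 - T) ^ k = gammaS (k + 1) := by
    rw [gammaS]
    ring
  rw [hγ, gammaS_succ_mul_inv, one_mul]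

theorem psi_eq_polynomial (m : ℕ) :
    HasPSSum (fun k : ℕ =>
      (U - 1) ^ (m + 1) * (1 - Z * T) ^ (m + 1) * U ^ k * (1 - T) ^ (k * (m + 1)) *
        ∏ i ∈ Finset.Icc 1 (k + 1), (gammaS i)⁻¹)
      (-(∑ j ∈ Finset.range (m + 1),
        (U - 1) ^ j * (1 - Z * T) ^ j * U ^ (m - j) *
          ∏ i ∈ Finset.Ico (j + 1) (m + 1), (1 - (1 - T) ^ i))) := by
  have hsum := pow_dvd_sum_range_psiTerm_sub prod_inv_gammaS_eq prod_empty m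
  have hterm := pow_dvd_psiTerm U ((U - 1) * (1 - Z * T)) (1 - T)
    (fun k => ∏ i ∈ Icc 1 k, (gammaS i)⁻¹) m
  convert hasPSSum_of_X_pow_dvd (1 : Fin 3) _ _ m hterm hsum using 1
  · funext k
    rw [psiTerm, mul_pow]
  · simp only [psiPolynomial, mul_pow]
end

section
/- For every m ≥ 0, let φ_{m+1}(u) = -Σ_{j=0}^{m} (u-1)^j·(1-zt)^j·u^{m-j}·Π_{i=j+1}^{m} (1 - (1-t)^i), a polynomial of degree at most m in u with coefficients in ℚ⟦t,z⟧. Then γ_1·φ_{m+1}(u) = (u-1)^{m+1}·(1-zt)^{m+1} + u·δ_1^{m}·φ_{m+1}(u·δ_1^{-1}), where φ_{m+1}(u·δ_1^{-1}) denotes substitution of u·δ_1^{-1} for u. -/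
/-!
STATEMENT 11: For every m ≥ 0, with
φ_{m+1}(w) = -Σ_{j=0}^{m} (w-1)^j·(1-zt)^j·w^{m-j}·Π_{i=j+1}^{m} (1 - (1-t)^i)
(a polynomial of degree at most m in its argument, with coefficients in ℚ⟦t,z⟧),
one has γ₁·φ_{m+1}(u) = (u-1)^{m+1}·(1-zt)^{m+1} + u·δ₁^{m}·φ_{m+1}(u·δ₁⁻¹) in ℚ⟦t,u,z⟧.
-/

open MvPowerSeries

/-- `δ_1 = u - (1-t)(u-1) = 1 + t(u-1)`. -/
noncomputable def delta1 : MvPowerSeries (Fin 3) ℚ := U - (1 - T) * (U - 1)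

/-- `γ_1 = u - (1-zt)(u-1) = 1 + zt(u-1)`. -/
noncomputable def gamma1 : MvPowerSeries (Fin 3) ℚ := U - (1 - Z * T) * (U - 1)

/-- The polynomial expression
`φ_{m+1}(w) = -Σ_{j=0}^{m} (w-1)^j (1-zt)^j w^{m-j} Π_{i=j+1}^{m} (1-(1-t)^i)`,
evaluated at the argument `w`; substitution for `u` is evaluation of this expression. -/
noncomputable def phi (m : ℕ) (w : MvPowerSeries (Fin 3) ℚ) : MvPowerSeries (Fin 3) ℚ :=
  -(∑ j ∈ Finset.range (m + 1),
    (w - 1) ^ j * (1 - Z * T) ^ j * w ^ (m - j) *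
      ∏ i ∈ Finset.Ico (j + 1) (m + 1), (1 - (1 - T) ^ i))

/-!
Writing `x = (1 - zt)(u - 1)`, one has `-φ_{m+1}(u) = G(x, u)` for the homogeneous form
`G(x, y) = Σ_{j ≤ m} x^j y^{m-j} Π_{i=j+1}^{m} (1 - b^i)` with `b = 1 - t`. Since
`u δ₁⁻¹ - 1 = b (u - 1) δ₁⁻¹`, homogeneity of degree `m` turns `δ₁^m φ_{m+1}(u δ₁⁻¹)` into
`-G(b x, u)`. The theorem is then the telescoping identity
`x G(x, y) - x^{m+1} = y (G(x, y) - G(b x, y))`, which holds because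
`(1 - b^j) Π_{i=j+1}^{m} (1 - b^i) = Π_{i=j}^{m} (1 - b^i)`, together with `γ₁ = u - x`.
-/

open Finset

section TailProdForm

variable {R : Type*} [CommRing R]

noncomputable def tailProdForm (b : R) (m : ℕ) (x y : R) : R :=
  ∑ j ∈ range (m + 1), x ^ j * y ^ (m - j) * ∏ i ∈ Ico (j + 1) (m + 1), (1 - b ^ i)

theorem tailProdForm_mul_mul (b c x y : R) (m : ℕ) :
    tailProdForm b m (c * x) (c * y) = c ^ m * tailProdForm b m x y := by
  rw [tailProdForm, tailProdForm, mul_sum]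
  refine sum_congr rfl fun j hj => ?_
  have hjm : j ≤ m := Nat.lt_succ_iff.mp (mem_range.mp hj)
  rw [mul_pow, mul_pow, ← pow_mul_pow_sub c hjm]
  ring

theorem mul_tailProdForm_sub_pow (b x y : R) (m : ℕ) :
    x * tailProdForm b m x y - x ^ (m + 1) =
      y * (tailProdForm b m x y - tailProdForm b m (b * x) y) := by
  have hshift : ∀ j ∈ range m,
      y * (x ^ (j + 1) * y ^ (m - (j + 1)) * ∏ i ∈ Ico (j + 1 + 1) (m + 1), (1 - b ^ i) -
          (b * x) ^ (j + 1) * y ^ (m - (j + 1)) * ∏ i ∈ Ico (j + 1 + 1) (m + 1), (1 - b ^ i)) =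
        x * (x ^ j * y ^ (m - j) * ∏ i ∈ Ico (j + 1) (m + 1), (1 - b ^ i)) := by
    intro j hj
    have hjm : j < m := mem_range.mp hj
    rw [prod_eq_prod_Ico_succ_bot (show j + 1 < m + 1 by omega),
      show m - j = m - (j + 1) + 1 by omega]
    ring
  have hlhs : x * tailProdForm b m x y - x ^ (m + 1) =
      ∑ j ∈ range m, x * (x ^ j * y ^ (m - j) * ∏ i ∈ Ico (j + 1) (m + 1), (1 - b ^ i)) := by
    rw [tailProdForm, mul_sum, sum_range_succ]
    simp [pow_succ']
  rw [hlhs, tailProdForm, tailProdForm, ← sum_sub_distrib, mul_sum, sum_range_succ',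
    sum_congr rfl hshift]
  simp

end TailProdForm

theorem phi_eq_neg_tailProdForm (m : ℕ) (w : MvPowerSeries (Fin 3) ℚ) :
    phi m w = -tailProdForm (1 - T) m ((1 - Z * T) * (w - 1)) w := by
  rw [phi, tailProdForm]
  exact congrArg Neg.neg (sum_congr rfl fun j _ => by rw [mul_pow]; ring)

theorem delta1_mul_inv : delta1 * delta1⁻¹ = 1 :=
  MvPowerSeries.mul_inv_cancel _ (by simp [delta1, T, U])

theorem delta1_pow_mul_phi_mul_inv (m : ℕ) :
    delta1 ^ m * phi m (U * delta1⁻¹) =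
      -tailProdForm (1 - T) m ((1 - T) * ((1 - Z * T) * (U - 1))) U := by
  have hdelta1 : delta1 = U - (1 - T) * (U - 1) := rfl
  have hsub : (1 - Z * T) * (U * delta1⁻¹ - 1) =
      delta1⁻¹ * ((1 - T) * ((1 - Z * T) * (U - 1))) := by
    linear_combination (1 - Z * T) * delta1_mul_inv - (1 - Z * T) * delta1⁻¹ * hdelta1
  rw [phi_eq_neg_tailProdForm, hsub, mul_comm U, tailProdForm_mul_mul, mul_neg,
    ← mul_assoc (delta1 ^ m), ← mul_pow, delta1_mul_inv, one_pow, one_mul]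

theorem phi_recursion (m : ℕ) :
    gamma1 * phi m U =
      (U - 1) ^ (m + 1) * (1 - Z * T) ^ (m + 1) + U * delta1 ^ m * phi m (U * delta1⁻¹) := by
  rw [mul_assoc U, delta1_pow_mul_phi_mul_inv, phi_eq_neg_tailProdForm, gamma1,
    mul_comm ((U - 1) ^ (m + 1)), ← mul_pow]
  linear_combination mul_tailProdForm_sub_pow (1 - T) ((1 - Z * T) * (U - 1)) U m
end
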